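/- There is a constant C_n > 0 depending only on n with the following property. Let r ∈ ℕ_{>0}^n, let L ⊂ ℝ^{2n} be the lattice generated by r_1 e_1, …, r_n e_n, e_{n+1}, …, e_{2n}, let à ∈ GL_{2n}(ℝ) and let d_n(Ã) denote the largest positive number d such that i·d is an eigenvalue of Ãᵀ J_n Ã. Define s_1 = min{ ‖Ã^{-1} v‖ : v ∈ L \ {0} } (shortest vector in the metric with orthonormal basis à e_i) and s_2 = 2√(π / d_n(Ã)). Then min(s_1, s_2)^{2n+2} ≤ C_n · (∏ r_i) · |det Ã|^{-1} · ‖Ãᵀ J_n Ã‖_HS^{-1}. -/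

import Mathlib

open Matrix Polynomial Complex

/-- The standard `2n×2n` symplectic matrix `J_n = [[0, I],[-I, 0]]`. -/
def symplJ (n : ℕ) : Matrix (Fin n ⊕ Fin n) (Fin n ⊕ Fin n) ℝ :=
  Matrix.fromBlocks 0 1 (-1) 0

/-- The Euclidean norm on `ℝ^{2n}`. -/
noncomputable def euclNorm {n : ℕ} (v : Fin n ⊕ Fin n → ℝ) : ℝ :=
  Real.sqrt (∑ i, v i ^ 2)

/-!
The matrix `M = Ãᵀ J Ã` is real skew-symmetric, so `I • M` is Hermitian with real eigenvalues
`μⱼ`. The spectrum of `M` is `{-I μⱼ}` and is symmetric under negation (it is also the spectrum of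
`Mᵀ = -M`), so every `|μⱼ| ≤ d` while `‖M‖²_HS = ∑ μⱼ² ≤ 2n d²`; hence
`s₂² = 4π / d ≤ 4π √(2n) / ‖M‖_HS`.
The lattice `Ã⁻¹ L` is `B ℤ^{2n}` with `B = Ã⁻¹ diag(r, 1)`, and Minkowski's convex body theorem
for a Euclidean ball gives `s₁^{2n} ≤ C |det B| = C (∏ rᵢ) / |det Ã|`.
Multiplying the two bounds gives the claim, since `min(s₁, s₂)^{2n+2} ≤ s₁^{2n} s₂²`.
-/

namespace Matrix
variable {ι : Type*} [Fintype ι] [DecidableEq ι]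

lemma IsHermitian.trace_mul_self {𝕜 : Type*} [RCLike 𝕜] {A : Matrix ι ι 𝕜}
    (hA : A.IsHermitian) : (A * A).trace = ((∑ i, hA.eigenvalues i ^ 2 : ℝ) : 𝕜) := by
  conv_lhs => rw [hA.spectral_theorem, ← map_mul, Unitary.conjStarAlgAut_apply, trace_mul_cycle,
    Unitary.coe_star_mul_self, one_mul, diagonal_mul_diagonal, trace_diagonal]
  simp [sq]

variable {M : Matrix ι ι ℝ}

omit [Fintype ι] [DecidableEq ι] in
lemma isHermitian_I_smul_map_ofReal (hM : Mᵀ = -M) : (I • M.map ofReal).IsHermitian := by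
  ext i j
  have := congr_fun₂ hM i j
  simp_all [conjTranspose_apply, transpose_apply]

lemma sum_sq_eq_sum_sq_eigenvalues (hM : Mᵀ = -M) :
    ∑ i, ∑ j, M i j ^ 2 = ∑ j, (isHermitian_I_smul_map_ofReal hM).eigenvalues j ^ 2 := by
  have htr : (I • M.map ofReal * I • M.map ofReal).trace = ((∑ i, ∑ j, M i j ^ 2 : ℝ) : ℂ) := by
    rw [smul_mul_smul_comm, trace_smul, I_mul_I, trace]
    push_cast
    simp only [diag, mul_apply, map_apply, smul_eq_mul, Finset.mul_sum]
    refine Finset.sum_congr rfl fun i _ => Finset.sum_congr rfl fun j _ => ?_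
    rw [show M j i = -M i j from congr_fun₂ hM i j]
    push_cast
    ring
  exact Complex.ofReal_injective (htr.symm.trans (isHermitian_I_smul_map_ofReal hM).trace_mul_self)

lemma mem_spectrum_map_ofReal_iff (hM : Mᵀ = -M) (z : ℂ) :
    z ∈ spectrum ℂ (M.map ofReal) ↔
      ∃ j, ((isHermitian_I_smul_map_ofReal hM).eigenvalues j : ℂ) = I * z := by
  have h := spectrum.unit_smul_eq_smul (M.map ofReal) (Units.mk0 I I_ne_zero)
  simp only [Units.smul_def, Units.val_mk0] at h
  rw [(isHermitian_I_smul_map_ofReal hM).spectrum_eq_image_range] at h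
  rw [← Set.smul_mem_smul_set_iff₀ I_ne_zero, ← h]
  simp [eq_comm]

lemma neg_mem_spectrum_map_ofReal_iff (hM : Mᵀ = -M) (z : ℂ) :
    -z ∈ spectrum ℂ (M.map ofReal) ↔ z ∈ spectrum ℂ (M.map ofReal) := by
  rw [← Set.neg_mem_neg, spectrum.neg_eq, neg_neg, ← Matrix.map_neg _ ofReal_neg, ← hM,
    transpose_map, mem_spectrum_iff_isRoot_charpoly, mem_spectrum_iff_isRoot_charpoly,
    charpoly_transpose]

lemma sq_le_sum_sq_of_isRoot_charpoly (hM : Mᵀ = -M) {d : ℝ}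
    (hd : (M.map ofReal).charpoly.IsRoot (I * d)) : d ^ 2 ≤ ∑ i, ∑ j, M i j ^ 2 := by
  rw [← mem_spectrum_iff_isRoot_charpoly, mem_spectrum_map_ofReal_iff hM] at hd
  obtain ⟨j, hj⟩ := hd
  have hj' : (isHermitian_I_smul_map_ofReal hM).eigenvalues j = -d := by
    rw [← mul_assoc, I_mul_I, neg_one_mul] at hj
    exact_mod_cast hj
  rw [sum_sq_eq_sum_sq_eigenvalues hM]
  calc d ^ 2 = (isHermitian_I_smul_map_ofReal hM).eigenvalues j ^ 2 := by rw [hj', neg_sq]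
    _ ≤ _ := Finset.single_le_sum (fun j _ => sq_nonneg _) (Finset.mem_univ j)

lemma sum_sq_le_card_mul_sq (hM : Mᵀ = -M) {d : ℝ}
    (hmax : ∀ d' : ℝ, 0 < d' → (M.map ofReal).charpoly.IsRoot (I * d') → d' ≤ d) :
    ∑ i, ∑ j, M i j ^ 2 ≤ Fintype.card ι * d ^ 2 := by
  set μ := (isHermitian_I_smul_map_ofReal hM).eigenvalues
  have hmem : ∀ j, I * (μ j : ℂ) ∈ spectrum ℂ (M.map ofReal) := fun j => by
    rw [← neg_mem_spectrum_map_ofReal_iff hM, mem_spectrum_map_ofReal_iff hM]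
    exact ⟨j, by rw [mul_neg, ← mul_assoc, I_mul_I]; ring⟩
  have hmem_abs : ∀ j, I * ((|μ j| : ℝ) : ℂ) ∈ spectrum ℂ (M.map ofReal) := fun j => by
    rcases abs_choice (μ j) with h | h <;> rw [h]
    · exact hmem j
    · push_cast
      rw [mul_neg, neg_mem_spectrum_map_ofReal_iff hM]
      exact hmem j
  have hsq : ∀ j, μ j ^ 2 ≤ d ^ 2 := fun j => by
    rcases eq_or_ne (μ j) 0 with h | h
    · simp [h, sq_nonneg]
    · have := hmax _ (abs_pos.2 h) ((mem_spectrum_iff_isRoot_charpoly).1 (hmem_abs j))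
      exact sq_le_sq.2 (this.trans (le_abs_self d))
  rw [sum_sq_eq_sum_sq_eigenvalues hM]
  calc ∑ j, μ j ^ 2 ≤ ∑ _j : ι, d ^ 2 := Finset.sum_le_sum fun j _ => hsq j
    _ = Fintype.card ι * d ^ 2 := by simp

lemma inv_le_sqrt_card_div_sqrt_sum_sq (hM : Mᵀ = -M) {d : ℝ} (hd : 0 < d)
    (hroot : (M.map ofReal).charpoly.IsRoot (I * d))
    (hmax : ∀ d' : ℝ, 0 < d' → (M.map ofReal).charpoly.IsRoot (I * d') → d' ≤ d) :
    d⁻¹ ≤ √(Fintype.card ι) / √(∑ i, ∑ j, M i j ^ 2) := by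
  have hpos : 0 < √(∑ i, ∑ j, M i j ^ 2) :=
    Real.sqrt_pos.2 ((pow_pos hd 2).trans_le (sq_le_sum_sq_of_isRoot_charpoly hM hroot))
  rw [le_div_iff₀ hpos, inv_mul_le_iff₀ hd]
  calc √(∑ i, ∑ j, M i j ^ 2) ≤ √(Fintype.card ι * d ^ 2) :=
        Real.sqrt_le_sqrt (sum_sq_le_card_mul_sq hM hmax)
    _ = d * √(Fintype.card ι) := by
        rw [Real.sqrt_mul' _ (sq_nonneg d), Real.sqrt_sq hd.le, mul_comm]

end Matrix

section Minkowski
open MeasureTheory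
variable {ι : Type*} [Fintype ι] [DecidableEq ι]

theorem Matrix.exists_ne_zero_mulVec_intCast_mem {B : Matrix ι ι ℝ} (hB : IsUnit B.det)
    {s : Set (ι → ℝ)} (h_symm : ∀ x ∈ s, -x ∈ s) (h_conv : Convex ℝ s)
    (h : ENNReal.ofReal |B.det| * 2 ^ Fintype.card ι < volume s) :
    ∃ c : ι → ℤ, c ≠ 0 ∧ B *ᵥ (fun i => (c i : ℝ)) ∈ s := by
  let b := (Pi.basisFun ℝ ι).map (B.toLinearEquiv' (B.invertibleOfIsUnitDet hB))
  have hb : ∀ i, b i = B *ᵥ Pi.single i 1 := fun i => by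
    simp only [b, Module.Basis.map_apply, Pi.basisFun_apply]
    exact toLin'_apply B _
  have hvol : volume (ZSpan.fundamentalDomain b) = ENNReal.ofReal |B.det| := by
    rw [ZSpan.volume_fundamentalDomain, ← det_transpose]
    congr 3
    ext i j
    simp [hb, mulVec_single]
  have : Countable (Submodule.span ℤ (Set.range b)).toAddSubgroup :=
    inferInstanceAs (Countable (Submodule.span ℤ (Set.range b)))
  obtain ⟨⟨x, hx⟩, hx0, hxs⟩ := exists_ne_zero_mem_lattice_of_measure_mul_two_pow_lt_measure
    (ZSpan.isAddFundamentalDomain' b volume) h_symm h_conv (by rwa [hvol, Module.finrank_pi])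
  obtain ⟨c, rfl⟩ := (Submodule.mem_span_range_iff_exists_fun ℤ).mp hx
  have hc : ∑ i, c i • b i = B *ᵥ (fun i => (c i : ℝ)) := by
    simp_rw [hb, ← Int.cast_smul_eq_zsmul ℝ, ← mulVec_smul, ← mulVec_sum]
    congr 1
    ext j
    simp [Finset.sum_apply, Pi.single_apply]
  refine ⟨c, fun h0 => hx0 ?_, hc ▸ hxs⟩
  simp [h0]

/-- The numerator `2^(m+1)` rather than `2^m` leaves room for the strict form of Minkowski's
theorem. -/
noncomputable def minkowskiConst (ι : Type*) [Fintype ι] : ℝ :=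
  2 ^ (Fintype.card ι + 1) / volume.real (Metric.closedBall (0 : EuclideanSpace ℝ ι) 1)

omit [DecidableEq ι] in
lemma EuclideanSpace.volume_real_closedBall_pos (x : EuclideanSpace ℝ ι) {r : ℝ} (hr : 0 < r) :
    0 < volume.real (Metric.closedBall x r) :=
  ENNReal.toReal_pos (Metric.measure_closedBall_pos volume _ hr).ne' measure_closedBall_lt_top.ne

omit [DecidableEq ι] in
lemma minkowskiConst_pos : 0 < minkowskiConst ι :=
  div_pos (by positivity) (EuclideanSpace.volume_real_closedBall_pos 0 one_pos)

theorem Matrix.exists_ne_zero_norm_mulVec_intCast_pow_le [Nonempty ι] {B : Matrix ι ι ℝ}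
    (hB : IsUnit B.det) :
    ∃ c : ι → ℤ, c ≠ 0 ∧
      ‖WithLp.toLp 2 (B *ᵥ fun i => (c i : ℝ))‖ ^ Fintype.card ι ≤ minkowskiConst ι * |B.det| := by
  set m := Fintype.card ι
  set κ := volume.real (Metric.closedBall (0 : EuclideanSpace ℝ ι) 1)
  have hκ : 0 < κ := EuclideanSpace.volume_real_closedBall_pos 0 one_pos
  have hdet : 0 < |B.det| := abs_pos.2 hB.ne_zero
  have hCdet : 0 ≤ minkowskiConst ι * |B.det| := (mul_pos minkowskiConst_pos hdet).le
  set ρ := (minkowskiConst ι * |B.det|) ^ (m⁻¹ : ℝ)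
  have hρ₀ : 0 ≤ ρ := Real.rpow_nonneg hCdet _
  have hρ : ρ ^ m = minkowskiConst ι * |B.det| :=
    Real.rpow_inv_natCast_pow hCdet Fintype.card_ne_zero
  let s : Set (ι → ℝ) := WithLp.toLp 2 ⁻¹' Metric.closedBall 0 ρ
  have h_symm : ∀ x ∈ s, -x ∈ s := fun x hx => by simpa [s] using hx
  have h_conv : Convex ℝ s :=
    (convex_closedBall 0 ρ).linear_preimage (WithLp.linearEquiv 2 ℝ (ι → ℝ)).symm.toLinearMap
  have h_vol : volume s = ENNReal.ofReal (ρ ^ m) * ENNReal.ofReal κ := by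
    rw [(PiLp.volume_preserving_toLp ι).measure_preimage measurableSet_closedBall.nullMeasurableSet,
      Measure.addHaar_closedBall' _ _ hρ₀, finrank_euclideanSpace,
      ofReal_measureReal measure_closedBall_lt_top.ne]
  obtain ⟨c, hc, hcs⟩ := B.exists_ne_zero_mulVec_intCast_mem hB h_symm h_conv (by
    rw [h_vol, ← ENNReal.ofReal_mul (pow_nonneg hρ₀ m), hρ,
      show (2 : ENNReal) ^ m = ENNReal.ofReal (2 ^ m) by simp, ← ENNReal.ofReal_mul hdet.le,
      ENNReal.ofReal_lt_ofReal_iff (mul_pos (mul_pos minkowskiConst_pos hdet) hκ),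
      mul_right_comm, minkowskiConst, div_mul_cancel₀ _ hκ.ne', pow_succ]
    nlinarith [pow_pos (two_pos : (0 : ℝ) < 2) m])
  refine ⟨c, hc, hρ ▸ pow_le_pow_left₀ (norm_nonneg _) ?_ m⟩
  simpa [s] using hcs

theorem Matrix.sInf_norm_inv_mulVec_pow_le [Nonempty ι] {A : Matrix ι ι ℝ} (hA : IsUnit A.det)
    {w : ι → ℝ} (hw : ∀ i, w i ≠ 0) :
    sInf {x : ℝ | ∃ c : ι → ℤ, c ≠ 0 ∧
        x = ‖WithLp.toLp 2 (A⁻¹ *ᵥ fun i => (c i : ℝ) * w i)‖} ^ Fintype.card ι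
      ≤ minkowskiConst ι * |∏ i, w i| * |A.det|⁻¹ := by
  set S := {x : ℝ | ∃ c : ι → ℤ, c ≠ 0 ∧ x = ‖WithLp.toLp 2 (A⁻¹ *ᵥ fun i => (c i : ℝ) * w i)‖}
  have hS : ∀ x ∈ S, 0 ≤ x := by
    rintro _ ⟨c, -, rfl⟩
    exact norm_nonneg _
  set B := A⁻¹ * diagonal w
  have hdetB : B.det = (A.det)⁻¹ * ∏ i, w i := by
    rw [det_mul, det_nonsing_inv, det_diagonal, Ring.inverse_eq_inv']
  have hB : IsUnit B.det := by
    rw [hdetB]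
    exact (isUnit_iff_ne_zero.2 (inv_ne_zero hA.ne_zero)).mul
      (isUnit_iff_ne_zero.2 (Finset.prod_ne_zero_iff.2 fun i _ => hw i))
  obtain ⟨c, hc, hle⟩ := B.exists_ne_zero_norm_mulVec_intCast_pow_le hB
  have hBc : B *ᵥ (fun i => (c i : ℝ)) = A⁻¹ *ᵥ fun i => (c i : ℝ) * w i := by
    rw [← mulVec_mulVec]
    congr 1
    ext i
    rw [mulVec_diagonal, mul_comm]
  have hinf : sInf S ≤ ‖WithLp.toLp 2 (B *ᵥ fun i => (c i : ℝ))‖ :=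
    csInf_le ⟨0, hS⟩ ⟨c, hc, by rw [hBc]⟩
  calc sInf S ^ Fintype.card ι ≤ ‖WithLp.toLp 2 (B *ᵥ fun i => (c i : ℝ))‖ ^ Fintype.card ι :=
        pow_le_pow_left₀ (Real.sInf_nonneg hS) hinf _
    _ ≤ minkowskiConst ι * |B.det| := hle
    _ = minkowskiConst ι * |∏ i, w i| * |A.det|⁻¹ := by
        rw [hdetB, abs_mul, abs_inv]
        ring

end Minkowski

lemma min_pow_add_le_mul_pow {a b : ℝ} (ha : 0 ≤ a) (hb : 0 ≤ b) (k l : ℕ) :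
    min a b ^ (k + l) ≤ a ^ k * b ^ l := by
  have hmin : 0 ≤ min a b := le_min ha hb
  rw [pow_add]
  exact mul_le_mul (pow_le_pow_left₀ hmin (min_le_left a b) k)
    (pow_le_pow_left₀ hmin (min_le_right a b) l) (pow_nonneg hmin l) (pow_nonneg ha k)

lemma Matrix.transpose_transpose_mul_mul_of_transpose_eq_neg {R m n : Type*} [CommRing R]
    [Fintype m] {J : Matrix m m R} (hJ : Jᵀ = -J) (A : Matrix m n R) :
    (Aᵀ * J * A)ᵀ = -(Aᵀ * J * A) := by
  simp [transpose_mul, hJ, Matrix.mul_assoc]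

lemma symplJ_transpose (n : ℕ) : (symplJ n)ᵀ = -symplJ n := by
  simp [symplJ, fromBlocks_transpose, fromBlocks_neg]

lemma euclNorm_eq_norm {n : ℕ} (v : Fin n ⊕ Fin n → ℝ) : euclNorm v = ‖WithLp.toLp 2 v‖ := by
  simp [euclNorm, EuclideanSpace.norm_eq]

/-- Systolic inequality for compact sub-Riemannian Heisenberg manifolds, reduced to
linear algebra.  There is `C_n > 0` such that for every `r ∈ ℕ_{>0}ⁿ`, every invertible
`Ã ∈ GL_{2n}(ℝ)`, and `d` the largest positive real with `i·d` an eigenvalue of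
`Ãᵀ J_n Ã`, writing `s₁` for the shortest nonzero vector of the lattice generated by
`r₁e₁,…,rₙeₙ,e_{n+1},…,e_{2n}` in the metric with orthonormal basis `Ãeᵢ`, and
`s₂ = 2√(π/d)`, one has
`min(s₁,s₂)^(2n+2) ≤ C_n · (∏ rᵢ) · |det Ã|⁻¹ · ‖Ãᵀ J_n Ã‖_HS⁻¹`. -/
theorem stmt_12 (n : ℕ) (hn : 0 < n) :
    ∃ C : ℝ, 0 < C ∧
      ∀ (r : Fin n → ℕ), (∀ i, 0 < r i) →
      ∀ (A : Matrix (Fin n ⊕ Fin n) (Fin n ⊕ Fin n) ℝ), IsUnit A.det →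
      ∀ d : ℝ, 0 < d →
      ((Aᵀ * symplJ n * A).map (Complex.ofReal)).charpoly.IsRoot (Complex.I * (d : ℂ)) →
      (∀ d' : ℝ, 0 < d' →
        ((Aᵀ * symplJ n * A).map (Complex.ofReal)).charpoly.IsRoot (Complex.I * (d' : ℂ)) →
        d' ≤ d) →
      min
        (sInf {x : ℝ | ∃ c : Fin n ⊕ Fin n → ℤ, c ≠ 0 ∧
          x = euclNorm (A⁻¹.mulVec (fun i =>
            (c i : ℝ) * Sum.elim (fun j : Fin n => (r j : ℝ)) (fun _ => (1 : ℝ)) i))})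
        (2 * Real.sqrt (Real.pi / d)) ^ (2 * n + 2)
      ≤ C * (∏ i, (r i : ℝ)) * |A.det|⁻¹ *
          (Real.sqrt (∑ i, ∑ j, ((Aᵀ * symplJ n * A) i j) ^ 2))⁻¹ := by
  have : Nonempty (Fin n ⊕ Fin n) := ⟨Sum.inl ⟨0, hn⟩⟩
  have hC := minkowskiConst_pos (ι := Fin n ⊕ Fin n)
  refine ⟨minkowskiConst (Fin n ⊕ Fin n) * (4 * Real.pi * √(2 * n)), by positivity, ?_⟩
  intro r hr A hA d hd hroot hmax
  have hcard : Fintype.card (Fin n ⊕ Fin n) = 2 * n := by simp [two_mul]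
  have hprod : 0 < ∏ i, (r i : ℝ) := Finset.prod_pos fun i _ => Nat.cast_pos.2 (hr i)
  have hs₁ := A.sInf_norm_inv_mulVec_pow_le hA (w := Sum.elim (fun j => (r j : ℝ)) fun _ => 1)
    (by rintro (i | i) <;> simp [(hr i).ne'])
  simp only [hcard, Fintype.prod_sum_type, Sum.elim_inl, Sum.elim_inr, Finset.prod_const_one,
    mul_one, abs_of_pos hprod] at hs₁
  have hinv := inv_le_sqrt_card_div_sqrt_sum_sq
    (transpose_transpose_mul_mul_of_transpose_eq_neg (symplJ_transpose n) A) hd hroot hmax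
  rw [hcard, Nat.cast_mul, Nat.cast_ofNat] at hinv
  simp_rw [euclNorm_eq_norm]
  refine (min_pow_add_le_mul_pow (Real.sInf_nonneg ?_) (by positivity) (2 * n) 2).trans ?_
  · rintro _ ⟨c, -, rfl⟩
    exact norm_nonneg _
  rw [mul_pow, Real.sq_sqrt (by positivity), div_eq_mul_inv]
  calc _ ≤ minkowskiConst (Fin n ⊕ Fin n) * (∏ i, (r i : ℝ)) * |A.det|⁻¹ *
        (2 ^ 2 * (Real.pi * (√(2 * n) / √(∑ i, ∑ j, (Aᵀ * symplJ n * A) i j ^ 2)))) := by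
        gcongr
    _ = _ := by ring
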